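/- Let h : ℝ^d → [0,1] be a measurable upper semicontinuous randomized binary classifier, let ν be a probability distribution on {0,1} and p₀, p₁ probability measures on ℝ^d, and let the adversarial risk be R(h) = ν(0)·∫ sup_{B(x,ε)} h dp₀ + ν(1)·∫ sup_{B(x,ε)}(1−h) dp₁, with R(f) for a {0,1}-valued f defined using sup of the 0-1 loss. Then R(h) = ∫₀¹ R(h^α) dα where h^α = 𝟙{h(·) > α}, and consequently there exists α ∈ [0,1] with R(h^α) ≤ R(h). -/

import Mathlib

/-!
Let `G x` and `M x` be the suprema of `h` and of `1 - h` over `closedBall x ε`. The worst-case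
loss of the level-set classifier `h^α` is `𝟙{α < G}` on class 0 and, for all but countably many
`α`, `𝟙{1 - α < M}` on class 1. By the layer-cake formula, `∫ G dp₀ = ∫₀¹ p₀{α < G} dα` and
`∫ M dp₁ = ∫₀¹ p₁{1 - α < M} dα`, so `R(h) = ∫₀¹ R(h^α) dα`, and some `α` does no worse than the
average. Upper semicontinuity of `h` makes `G` upper and `M` lower semicontinuous, hence both
measurable.
-/

open MeasureTheory

/-- Adversarial risk of a (possibly randomized) classifier `h : ℝ^d → [0,1]`:
`ν0` and `ν1` are the class marginals, `p₀, p₁` the class-conditional distributions. -/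
noncomputable def advRisk {d : ℕ} (ε ν0 ν1 : ℝ)
    (p₀ p₁ : Measure (EuclideanSpace ℝ (Fin d)))
    (h : EuclideanSpace ℝ (Fin d) → ℝ) : ℝ :=
  ν0 * ∫ x, (⨆ x' ∈ Metric.closedBall x ε, h x') ∂p₀ +
  ν1 * ∫ x, (⨆ x' ∈ Metric.closedBall x ε, (1 - h x')) ∂p₁

open Metric Set
open scoped Interval

-- In `ℝ`, `⨆ y ∈ s, f y` has the junk value `0` for every inner supremum over `y ∉ s`,
-- whence the nonnegativity hypotheses.
namespace Real

variable {X : Type*} {s : Set X} {f : X → ℝ}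

lemma biSup_le {c : ℝ} (hc : 0 ≤ c) (hf : ∀ y ∈ s, f y ≤ c) : ⨆ y ∈ s, f y ≤ c :=
  Real.iSup_le (fun y => Real.iSup_le (hf y) hc) hc

lemma biSup_nonneg (hf : ∀ y ∈ s, 0 ≤ f y) : 0 ≤ ⨆ y ∈ s, f y :=
  Real.iSup_nonneg fun y => Real.iSup_nonneg (hf y)

lemma le_biSup (hf : BddAbove (f '' s)) {y : X} (hy : y ∈ s) : f y ≤ ⨆ y ∈ s, f y :=
  le_ciSup₂ (f := fun y (_ : y ∈ s) => f y)
    (hf.mono <| iUnion_subset fun _ => range_subset_iff.2 fun hz => mem_image_of_mem f hz) y hy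

lemma lt_biSup_iff {a : ℝ} (ha : 0 ≤ a) (hf : BddAbove (f '' s)) :
    a < ⨆ y ∈ s, f y ↔ ∃ y ∈ s, a < f y := by
  refine ⟨fun h => ?_, fun ⟨y, hy, hay⟩ => hay.trans_le (le_biSup hf hy)⟩
  by_contra! hs
  exact (biSup_le ha hs).not_gt h

lemma lt_biSup_iff_exists_le {a : ℝ} (ha : 0 ≤ a) (hf : BddAbove (f '' s))
    (hne : ⨆ y ∈ s, f y ≠ a) : a < ⨆ y ∈ s, f y ↔ ∃ y ∈ s, a ≤ f y := by
  refine ⟨fun h => ?_, fun ⟨y, hy, hay⟩ => (hay.trans (le_biSup hf hy)).lt_of_ne' hne⟩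
  obtain ⟨y, hy, hay⟩ := (lt_biSup_iff ha hf).1 h
  exact ⟨y, hy, hay.le⟩

open Classical in
lemma biSup_ite_one_zero (p : X → Prop) [DecidablePred p] :
    ⨆ y ∈ s, (if p y then (1 : ℝ) else 0) = if ∃ y ∈ s, p y then 1 else 0 := by
  have hbdd : BddAbove ((fun y => if p y then (1 : ℝ) else 0) '' s) :=
    ⟨1, by rintro _ ⟨y, -, rfl⟩; dsimp only; split_ifs <;> norm_num⟩
  split_ifs with h
  · obtain ⟨y, hy, hpy⟩ := h
    refine le_antisymm (biSup_le zero_le_one fun z _ => ?_) ?_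
    · split_ifs <;> norm_num
    · simpa [hpy] using le_biSup hbdd hy
  · push Not at h
    refine le_antisymm (biSup_le le_rfl fun z hz => by simp [h z hz]) ?_
    exact biSup_nonneg fun z _ => by split_ifs <;> norm_num

end Real

lemma UpperSemicontinuous.lowerSemicontinuous_const_sub {X : Type*} [TopologicalSpace X]
    {f : X → ℝ} (hf : UpperSemicontinuous f) (a : ℝ) : LowerSemicontinuous fun x => a - f x :=
  fun x c hc => (hf x (a - c) (by linarith)).mono fun _ hy => by linarith

section BallSup

variable {E : Type*}

noncomputable def ballSup [PseudoMetricSpace E] (ε : ℝ) (f : E → ℝ) (x : E) : ℝ :=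
  ⨆ y ∈ closedBall x ε, f y

lemma ballSup_nonneg [PseudoMetricSpace E] {ε : ℝ} {f : E → ℝ} (hf : 0 ≤ f) (x : E) :
    0 ≤ ballSup ε f x :=
  Real.biSup_nonneg fun y _ => hf y

lemma ballSup_le [PseudoMetricSpace E] {ε c : ℝ} {f : E → ℝ} (hc : 0 ≤ c) (hf : ∀ y, f y ≤ c)
    (x : E) : ballSup ε f x ≤ c :=
  Real.biSup_le hc fun y _ => hf y

variable [SeminormedAddCommGroup E] {ε : ℝ} {f : E → ℝ}

lemma upperSemicontinuous_ballSup [ProperSpace E] (hf : UpperSemicontinuous f) (hf0 : 0 ≤ f) :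
    UpperSemicontinuous (ballSup ε f) := by
  intro x c hc
  obtain ⟨c', hxc', hc'c⟩ := exists_between hc
  have hsub : closedBall x ε ⊆ {z | f z < c'} := fun z hz =>
    (Real.le_biSup ((hf.upperSemicontinuousOn _).bddAbove_of_isCompact
      (isCompact_closedBall x ε)) hz).trans_lt hxc'
  obtain ⟨δ, hδ, hthick⟩ := (isCompact_closedBall x ε).exists_thickening_subset_open
    (hf.isOpen_preimage c') hsub
  filter_upwards [ball_mem_nhds x hδ] with y hy
  refine (Real.biSup_le ((ballSup_nonneg hf0 x).trans hxc'.le) fun z hz => ?_).trans_lt hc'c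
  refine (hthick (mem_thickening_iff.2 ⟨z - y + x, ?_, ?_⟩)).le
  · simpa [dist_eq_norm] using hz
  · rwa [dist_eq_norm, show z - (z - y + x) = y - x by abel, ← dist_eq_norm]

-- After translation, `ballSup ε f` is a supremum of the lower semicontinuous `x ↦ f (x + v)`.
lemma lowerSemicontinuous_ballSup (hf : LowerSemicontinuous f) (hbdd : BddAbove (range f)) :
    LowerSemicontinuous (ballSup ε f) := by
  have htrans : ballSup ε f = fun x => ⨆ v, ⨆ (_ : v ∈ closedBall (0 : E) ε), f (x + v) := by
    ext x
    rw [ballSup, ← (Equiv.addLeft x).iSup_comp]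
    simp
  rw [htrans]
  obtain ⟨C, hC⟩ := hbdd
  refine lowerSemicontinuous_ciSup (fun x => ⟨max C 0, ?_⟩) fun v => ?_
  · rintro _ ⟨v, rfl⟩
    exact Real.iSup_le (fun _ => le_max_of_le_left (hC (mem_range_self _))) (le_max_right _ _)
  · by_cases hv : v ∈ closedBall (0 : E) ε
    · simp only [hv, ciSup_pos]
      exact hf.comp (continuous_add_const v)
    · simpa [hv] using lowerSemicontinuous_const

end BallSup

section Layercake

variable {X : Type*} [MeasurableSpace X] {μ : Measure X} {f : X → ℝ}

lemma integral_eq_intervalIntegral_measureReal_lt [IsFiniteMeasure μ] (hf : Measurable f)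
    (h0 : 0 ≤ f) (h1 : ∀ x, f x ≤ 1) :
    ∫ x, f x ∂μ = ∫ t in (0 : ℝ)..1, μ.real {x | t < f x} := by
  have hint : Integrable f μ := Integrable.of_bound hf.aestronglyMeasurable 1
    (ae_of_all _ fun x => by rw [Real.norm_eq_abs, abs_of_nonneg (h0 x)]; exact h1 x)
  rw [hint.integral_eq_integral_meas_lt (ae_of_all _ h0),
    intervalIntegral.integral_of_le zero_le_one]
  refine setIntegral_eq_of_subset_of_ae_sdiff_eq_zero nullMeasurableSet_Ioi Ioc_subset_Ioi_self
    (ae_of_all _ fun t ht => ?_)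
  have ht1 : 1 < t := by simpa using ht
  simp [fun x => ((h1 x).trans_lt ht1).not_gt]

lemma intervalIntegrable_measureReal_lt [IsFiniteMeasure μ] (f : X → ℝ) (a b : ℝ) :
    IntervalIntegrable (fun t => μ.real {x | t < f x}) volume a b :=
  Antitone.intervalIntegrable fun _ _ hst => measureReal_mono fun _ hx => hst.trans_lt hx

lemma intervalIntegrable_measureReal_sub_lt [IsFiniteMeasure μ] (f : X → ℝ) (c a b : ℝ) :
    IntervalIntegrable (fun t => μ.real {x | c - t < f x}) volume a b :=
  Monotone.intervalIntegrable fun _ _ hst =>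
    measureReal_mono fun _ hx => (sub_le_sub_left hst c).trans_lt hx

lemma ae_measure_setOf_eq_eq_zero [SFinite μ] (hf : Measurable f) :
    ∀ᵐ t ∂volume, μ {x | f x = t} = 0 :=
  (measure_eq_zero_iff_ae_notMem.1
    ((Measure.countable_meas_level_set_pos hf).measure_zero volume)).mono
    fun t ht => by simpa using ht

end Layercake

lemma exists_mem_Icc_le_intervalIntegral {g : ℝ → ℝ} (hg : IntervalIntegrable g volume 0 1) :
    ∃ α ∈ Icc (0 : ℝ) 1, g α ≤ ∫ α in (0 : ℝ)..1, g α := by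
  obtain ⟨α, hα, hle⟩ := exists_le_setAverage (s := Ioc (0 : ℝ) 1) (by simp) (by simp) hg.1
  refine ⟨α, Ioc_subset_Icc_self hα, hle.trans_eq ?_⟩
  simp [setAverage_eq, intervalIntegral.integral_of_le zero_le_one]

section LevelSets

variable {d : ℕ} {h : EuclideanSpace ℝ (Fin d) → ℝ} {ε ν0 ν1 : ℝ}
  {p₀ p₁ : Measure (EuclideanSpace ℝ (Fin d))}

/-- For almost every `α ∈ [0, 1]`, the adversarial risk of the level-set classifier `h^α`. -/
noncomputable def levelRisk (ε ν0 ν1 : ℝ) (p₀ p₁ : Measure (EuclideanSpace ℝ (Fin d)))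
    (h : EuclideanSpace ℝ (Fin d) → ℝ) (α : ℝ) : ℝ :=
  ν0 * p₀.real {x | α < ballSup ε h x} +
    ν1 * p₁.real {x | 1 - α < ballSup ε (fun y => 1 - h y) x}

lemma measurable_ballSup (husc : UpperSemicontinuous h) (h0 : 0 ≤ h) :
    Measurable (ballSup ε h) :=
  (upperSemicontinuous_ballSup husc h0).measurable

lemma measurable_ballSup_one_sub (husc : UpperSemicontinuous h) (h0 : 0 ≤ h) :
    Measurable (ballSup ε fun y => 1 - h y) :=
  (lowerSemicontinuous_ballSup (husc.lowerSemicontinuous_const_sub 1)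
    ⟨1, by rintro _ ⟨y, rfl⟩; exact sub_le_self 1 (h0 y)⟩).measurable

lemma advRisk_levelSet_eq (husc : UpperSemicontinuous h) (hrange : ∀ x, h x ∈ Icc (0 : ℝ) 1)
    {α : ℝ} (hα : α ∈ Icc (0 : ℝ) 1)
    (hnull : p₁ {x | ballSup ε (fun y => 1 - h y) x = 1 - α} = 0) :
    advRisk ε ν0 ν1 p₀ p₁ (fun x => if h x > α then 1 else 0) = levelRisk ε ν0 ν1 p₀ p₁ h α := by
  classical
  have h0 : 0 ≤ h := fun x => (hrange x).1
  have hbdd : ∀ s, BddAbove (h '' s) := fun s => ⟨1, by rintro _ ⟨y, -, rfl⟩; exact (hrange y).2⟩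
  have hbdd' : ∀ s, BddAbove ((fun y => 1 - h y) '' s) :=
    fun s => ⟨1, by rintro _ ⟨y, -, rfl⟩; linarith [(hrange y).1]⟩
  have h₀ : (fun x => ⨆ y ∈ closedBall x ε, if h y > α then (1 : ℝ) else 0) =
      {x | α < ballSup ε h x}.indicator 1 := by
    ext x
    rw [Real.biSup_ite_one_zero, indicator_apply]
    exact if_congr (Real.lt_biSup_iff hα.1 (hbdd _)).symm rfl rfl
  -- `h` need not attain its infimum on a ball, so this holds only off the null set of `hnull`.
  have h₁ : (fun x => ⨆ y ∈ closedBall x ε, 1 - if h y > α then (1 : ℝ) else 0) =ᵐ[p₁]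
      {x | 1 - α < ballSup ε (fun y => 1 - h y) x}.indicator 1 := by
    filter_upwards [measure_eq_zero_iff_ae_notMem.1 hnull] with x hx
    have hflip : ∀ y, (1 - if h y > α then (1 : ℝ) else 0) = if 1 - α ≤ 1 - h y then 1 else 0 :=
      fun y => by split_ifs <;> linarith
    simp only [hflip]
    rw [Real.biSup_ite_one_zero, indicator_apply]
    exact if_congr (Real.lt_biSup_iff_exists_le (sub_nonneg.2 hα.2) (hbdd' _) hx).symm rfl rfl
  rw [advRisk, h₀, integral_congr_ae h₁,
    integral_indicator_one (measurableSet_lt measurable_const (measurable_ballSup husc h0)),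
    integral_indicator_one
      (measurableSet_lt measurable_const (measurable_ballSup_one_sub husc h0)), levelRisk]

lemma advRisk_levelSet_ae_eq [SFinite p₁] (husc : UpperSemicontinuous h)
    (hrange : ∀ x, h x ∈ Icc (0 : ℝ) 1) :
    (fun α => advRisk ε ν0 ν1 p₀ p₁ (fun x => if h x > α then 1 else 0))
      =ᵐ[volume.restrict (Ι 0 1)] levelRisk ε ν0 ν1 p₀ p₁ h := by
  have hnull : ∀ᵐ α, p₁ {x | ballSup ε (fun y => 1 - h y) x = 1 - α} = 0 :=
    (Measure.measurePreserving_sub_left volume 1).quasiMeasurePreserving.ae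
      (ae_measure_setOf_eq_eq_zero (measurable_ballSup_one_sub husc fun x => (hrange x).1))
  rw [uIoc_of_le zero_le_one]
  filter_upwards [ae_restrict_mem measurableSet_Ioc, ae_restrict_of_ae hnull] with α hα hα'
  exact advRisk_levelSet_eq husc hrange (Ioc_subset_Icc_self hα) hα'

lemma intervalIntegrable_levelRisk [IsFiniteMeasure p₀] [IsFiniteMeasure p₁] :
    IntervalIntegrable (levelRisk ε ν0 ν1 p₀ p₁ h) volume 0 1 :=
  ((intervalIntegrable_measureReal_lt _ _ _).const_mul ν0).add
    ((intervalIntegrable_measureReal_sub_lt _ _ _ _).const_mul ν1)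

lemma advRisk_eq_intervalIntegral_levelRisk [IsFiniteMeasure p₀] [IsFiniteMeasure p₁]
    (husc : UpperSemicontinuous h) (hrange : ∀ x, h x ∈ Icc (0 : ℝ) 1) :
    advRisk ε ν0 ν1 p₀ p₁ h = ∫ α in (0 : ℝ)..1, levelRisk ε ν0 ν1 p₀ p₁ h α := by
  have h0 : 0 ≤ h := fun x => (hrange x).1
  have hflip : ∫ α in (0 : ℝ)..1, p₁.real {x | 1 - α < ballSup ε (fun y => 1 - h y) x} =
      ∫ t in (0 : ℝ)..1, p₁.real {x | t < ballSup ε (fun y => 1 - h y) x} := by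
    simpa using intervalIntegral.integral_comp_sub_left
      (fun t => p₁.real {x | t < ballSup ε (fun y => 1 - h y) x}) (a := 0) (b := 1) 1
  change ν0 * ∫ x, ballSup ε h x ∂p₀ + ν1 * ∫ x, ballSup ε (fun y => 1 - h y) x ∂p₁ = _
  rw [integral_eq_intervalIntegral_measureReal_lt (measurable_ballSup husc h0)
      (ballSup_nonneg h0) (ballSup_le zero_le_one fun x => (hrange x).2),
    integral_eq_intervalIntegral_measureReal_lt (measurable_ballSup_one_sub husc h0)
      (ballSup_nonneg fun x => sub_nonneg.2 (hrange x).2)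
      (ballSup_le zero_le_one fun x => sub_le_self 1 (hrange x).1),
    ← hflip, ← intervalIntegral.integral_const_mul, ← intervalIntegral.integral_const_mul,
    ← intervalIntegral.integral_add]
  · rfl
  · exact (intervalIntegrable_measureReal_lt _ _ _).const_mul ν0
  · exact (intervalIntegrable_measureReal_sub_lt _ _ _ _).const_mul ν1

end LevelSets

theorem randomized_dominated_by_level_set_general {d : ℕ}
    (h : EuclideanSpace ℝ (Fin d) → ℝ)
    (husc : UpperSemicontinuous h)
    (hrange : ∀ x, h x ∈ Set.Icc (0:ℝ) 1)
    (ε : ℝ)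
    (ν0 ν1 : ℝ)
    (p₀ p₁ : Measure (EuclideanSpace ℝ (Fin d)))
    [IsProbabilityMeasure p₀] [IsProbabilityMeasure p₁] :
    (advRisk ε ν0 ν1 p₀ p₁ h =
      ∫ α in (0:ℝ)..1,
        advRisk ε ν0 ν1 p₀ p₁ (fun x => if h x > α then (1:ℝ) else 0)) ∧
    ∃ α ∈ Set.Icc (0:ℝ) 1,
      advRisk ε ν0 ν1 p₀ p₁ (fun x => if h x > α then (1:ℝ) else 0) ≤
        advRisk ε ν0 ν1 p₀ p₁ h := by
  have hae := advRisk_levelSet_ae_eq (ε := ε) (ν0 := ν0) (ν1 := ν1) (p₀ := p₀) (p₁ := p₁)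
    husc hrange
  have hrisk : ∫ α in (0:ℝ)..1, advRisk ε ν0 ν1 p₀ p₁ (fun x => if h x > α then (1:ℝ) else 0) =
      advRisk ε ν0 ν1 p₀ p₁ h :=
    (intervalIntegral.integral_congr_ae_restrict hae).trans
      (advRisk_eq_intervalIntegral_levelRisk husc hrange).symm
  obtain ⟨α, hα, hle⟩ :=
    exists_mem_Icc_le_intervalIntegral (intervalIntegrable_levelRisk.congr_ae hae.symm)
  exact ⟨hrisk.symm, α, hα, hle.trans_eq hrisk⟩

theorem randomized_dominated_by_level_set {d : ℕ}
    (h : EuclideanSpace ℝ (Fin d) → ℝ) (hmeas : Measurable h)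
    (husc : UpperSemicontinuous h)
    (hrange : ∀ x, h x ∈ Set.Icc (0:ℝ) 1)
    (ε : ℝ) (hε : 0 < ε)
    (ν0 ν1 : ℝ) (hν0 : 0 ≤ ν0) (hν1 : 0 ≤ ν1) (hν : ν0 + ν1 = 1)
    (p₀ p₁ : Measure (EuclideanSpace ℝ (Fin d)))
    [IsProbabilityMeasure p₀] [IsProbabilityMeasure p₁] :
    (advRisk ε ν0 ν1 p₀ p₁ h =
      ∫ α in (0:ℝ)..1,
        advRisk ε ν0 ν1 p₀ p₁ (fun x => if h x > α then (1:ℝ) else 0)) ∧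
    ∃ α ∈ Set.Icc (0:ℝ) 1,
      advRisk ε ν0 ν1 p₀ p₁ (fun x => if h x > α then (1:ℝ) else 0) ≤
        advRisk ε ν0 ν1 p₀ p₁ h :=
  randomized_dominated_by_level_set_general h husc hrange ε ν0 ν1 p₀ p₁
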